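/- Let n, m and m' be nonnegative integers such that n+m is odd and n+m' is even. Then the partisan chocolate game position PC(n,m) is greater than or equal to PC(n,m') in the normal-play game order. -/

import Mathlib

namespace SetTheory

universe u

/-- Pre-games, as in Mathlib (December 2024), which no longer has them. -/
inductive PGame : Type (u + 1)
  | mk : ∀ α β : Type u, (α → PGame) → (β → PGame) → PGame

namespace PGame

/-- The pair `(x ≤ y, x ⧏ y)`, defined by simultaneous recursion as in old Mathlib:
`x ≤ y ↔ (∀ i, xL i ⧏ y) ∧ ∀ j, x ⧏ yR j` and `x ⧏ y ↔ (∃ i, x ≤ yL i) ∨ ∃ j, xR j ≤ y`. -/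
noncomputable def LeLF : PGame.{u} → PGame.{u} → Prop × Prop :=
  fun x => PGame.rec (motive := fun _ => PGame.{u} → Prop × Prop)
    (fun xl xr xL xR IHxL IHxR y =>
      PGame.rec (motive := fun _ => Prop × Prop)
        (fun yl yr yL yR IHyL IHyR =>
          ((∀ i, (IHxL i (mk yl yr yL yR)).2) ∧ ∀ j, (IHyR j).2,
            (∃ i, (IHyL i).1) ∨ ∃ j, (IHxR j (mk yl yr yL yR)).1)) y) x

noncomputable instance : LE PGame.{u} := ⟨fun x y => (LeLF x y).1⟩

end PGame

end SetTheory

open SetTheory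

/-- The partisan chocolate game position `PC n m`.
Left options: `PC n' m` with `n' < n` and `n' + m` even, and `PC n m'` with `m' < m` and
`n + m'` even. Right options: the same with "odd" in place of "even". -/
def PC : ℕ → ℕ → SetTheory.PGame
  | n, m =>
    SetTheory.PGame.mk
      {p : ℕ × ℕ // (p.2 = m ∧ p.1 < n ∧ Even (p.1 + m)) ∨ (p.1 = n ∧ p.2 < m ∧ Even (n + p.2))}
      {p : ℕ × ℕ // (p.2 = m ∧ p.1 < n ∧ Odd (p.1 + m)) ∨ (p.1 = n ∧ p.2 < m ∧ Odd (n + p.2))}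
      (fun p => PC p.1.1 p.1.2)
      (fun p => PC p.1.1 p.1.2)
termination_by n m => n + m
decreasing_by
  all_goals rcases p.2 with ⟨h1, h2, -⟩ | ⟨h1, h2, -⟩ <;> omega


/-! Let `level n m = ⌊n/2⌋ + ⌊m/2⌋` and order the positions by putting every even-sum position below
every odd-sum one, the even-sum positions by increasing level and the odd-sum ones by decreasing
level (`PC.key`). Then `PC` is monotone for this order. Left moves (to even-sum positions) go
strictly down and Right moves (to odd-sum positions) strictly up; conversely, if `(n, m)` lies
strictly below `(a, b)`, then Left has a move from `(a, b)` or Right has a move from `(n, m)` that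
does not cross the other position. Simultaneous induction on `n + m + a + b` then proves
`PC n m ≤ PC a b` for `(n, m)` below `(a, b)` and `PC n m ⧏ PC a b` for `(n, m)` strictly below. -/

namespace SetTheory.PGame

def LF (x y : PGame.{u}) : Prop := (LeLF x y).2

infix:50 " ⧏ " => LF

theorem mk_le_mk {xl xr : Type u} {xL : xl → PGame.{u}} {xR : xr → PGame.{u}}
    {yl yr : Type u} {yL : yl → PGame.{u}} {yR : yr → PGame.{u}} :
    mk xl xr xL xR ≤ mk yl yr yL yR ↔
      (∀ i, xL i ⧏ mk yl yr yL yR) ∧ ∀ j, mk xl xr xL xR ⧏ yR j :=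
  Iff.rfl

theorem lf_mk_of_le_moveLeft {x : PGame.{u}} {yl yr : Type u} {yL : yl → PGame.{u}}
    {yR : yr → PGame.{u}} (i : yl) (h : x ≤ yL i) : x ⧏ mk yl yr yL yR := by
  cases x
  exact Or.inl ⟨i, h⟩

theorem mk_lf_of_moveRight_le {xl xr : Type u} {xL : xl → PGame.{u}} {xR : xr → PGame.{u}}
    {y : PGame.{u}} (j : xr) (h : xR j ≤ y) : mk xl xr xL xR ⧏ y := by
  cases y
  exact Or.inr ⟨j, h⟩

end SetTheory.PGame

open SetTheory.PGame

namespace PC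

/-- Left's options of `PC n m` are the moves to even-sum positions, Right's those to odd-sum ones. -/
def IsMove (n m p q : ℕ) : Prop := q = m ∧ p < n ∨ p = n ∧ q < m

theorem IsMove.add_lt {n m p q : ℕ} (hmove : IsMove n m p q) : p + q < n + m := by
  unfold IsMove at hmove
  omega

theorem lf_of_le_leftMove {x : PGame} {n m p q : ℕ} (hmove : IsMove n m p q)
    (heven : Even (p + q)) (h : x ≤ PC p q) : x ⧏ PC n m := by
  rw [PC]
  refine lf_mk_of_le_moveLeft ⟨(p, q), ?_⟩ h
  rcases hmove with ⟨rfl, hp⟩ | ⟨rfl, hq⟩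
  exacts [Or.inl ⟨rfl, hp, heven⟩, Or.inr ⟨rfl, hq, heven⟩]

theorem lf_of_rightMove_le {y : PGame} {n m p q : ℕ} (hmove : IsMove n m p q)
    (hodd : Odd (p + q)) (h : PC p q ≤ y) : PC n m ⧏ y := by
  rw [PC]
  refine mk_lf_of_moveRight_le ⟨(p, q), ?_⟩ h
  rcases hmove with ⟨rfl, hp⟩ | ⟨rfl, hq⟩
  exacts [Or.inl ⟨rfl, hp, hodd⟩, Or.inr ⟨rfl, hq, hodd⟩]

theorem le_of_forall_lf {n m a b : ℕ}
    (hleft : ∀ p q, IsMove n m p q → Even (p + q) → PC p q ⧏ PC a b)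
    (hright : ∀ p q, IsMove a b p q → Odd (p + q) → PC n m ⧏ PC p q) :
    PC n m ≤ PC a b := by
  rw [PC, PC, mk_le_mk, ← PC, ← PC]
  constructor
  · rintro ⟨⟨p, q⟩, ⟨rfl, hp, heven⟩ | ⟨rfl, hq, heven⟩⟩
    exacts [hleft p q (Or.inl ⟨rfl, hp⟩) heven, hleft p q (Or.inr ⟨rfl, hq⟩) heven]
  · rintro ⟨⟨p, q⟩, ⟨rfl, hp, hodd⟩ | ⟨rfl, hq, hodd⟩⟩
    exacts [hright p q (Or.inl ⟨rfl, hp⟩) hodd, hright p q (Or.inr ⟨rfl, hq⟩) hodd]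

def level (n m : ℕ) : ℕ := n / 2 + m / 2

def key (n m : ℕ) : ℕ ×ₗ ℤ :=
  toLex ((n + m) % 2, if (n + m) % 2 = 0 then (level n m : ℤ) else -(level n m : ℤ))

theorem key_lt_key_iff {n m p q : ℕ} :
    key p q < key n m ↔ (p + q) % 2 < (n + m) % 2 ∨
      (p + q) % 2 = (n + m) % 2 ∧ ((n + m) % 2 = 0 ∧ level p q < level n m ∨
        (n + m) % 2 = 1 ∧ level n m < level p q) := by
  simp only [key, Prod.Lex.toLex_lt_toLex]
  split_ifs <;> omega

theorem key_le_key_iff {n m p q : ℕ} :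
    key p q ≤ key n m ↔ (p + q) % 2 < (n + m) % 2 ∨
      (p + q) % 2 = (n + m) % 2 ∧ ((n + m) % 2 = 0 ∧ level p q ≤ level n m ∨
        (n + m) % 2 = 1 ∧ level n m ≤ level p q) := by
  simp only [key, Prod.Lex.toLex_le_toLex]
  split_ifs <;> omega

theorem key_lt_of_leftMove {n m p q : ℕ} (hmove : IsMove n m p q) (heven : Even (p + q)) :
    key p q < key n m := by
  rw [key_lt_key_iff, Nat.even_iff] at *
  unfold IsMove level at *
  omega

theorem key_lt_of_rightMove {n m p q : ℕ} (hmove : IsMove n m p q) (hodd : Odd (p + q)) :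
    key n m < key p q := by
  rw [key_lt_key_iff, Nat.odd_iff] at *
  unfold IsMove level at *
  omega

theorem exists_move_of_key_lt {n m a b : ℕ} (h : key n m < key a b) :
    (∃ p q, IsMove a b p q ∧ Even (p + q) ∧ key n m ≤ key p q) ∨
      ∃ p q, IsMove n m p q ∧ Odd (p + q) ∧ key p q ≤ key a b := by
  rw [key_lt_key_iff] at h
  simp only [key_le_key_iff, IsMove, Nat.even_iff, Nat.odd_iff]
  unfold level at *
  rcases Nat.mod_two_eq_zero_or_one (a + b) with hab | hab
  · rcases le_or_gt 2 a with ha | ha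
    · exact Or.inl ⟨a - 2, b, by omega⟩
    · exact Or.inl ⟨a, b - 2, by omega⟩
  rcases Nat.mod_two_eq_zero_or_one (n + m) with hnm | hnm
  · by_cases hlevel : n / 2 + m / 2 ≤ a / 2 + b / 2
    · rcases Nat.mod_two_eq_zero_or_one a with ha | ha
      · exact Or.inl ⟨a, b - 1, by omega⟩
      · exact Or.inl ⟨a - 1, b, by omega⟩
    · rcases Nat.eq_zero_or_pos n with hn | hn
      · exact Or.inr ⟨n, m - 1, by omega⟩
      · exact Or.inr ⟨n - 1, m, by omega⟩
  · rcases le_or_gt 2 n with hn | hn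
    · exact Or.inr ⟨n - 2, m, by omega⟩
    · exact Or.inr ⟨n, m - 2, by omega⟩

theorem lf_of_key_lt_of_forall_le {n m a b : ℕ}
    (ih : ∀ p q c d, p + q + c + d < n + m + a + b → key p q ≤ key c d → PC p q ≤ PC c d)
    (h : key n m < key a b) : PC n m ⧏ PC a b := by
  rcases exists_move_of_key_lt h with ⟨p, q, hmove, heven, hkey⟩ | ⟨p, q, hmove, hodd, hkey⟩
  · exact lf_of_le_leftMove hmove heven (ih n m p q (by linarith [hmove.add_lt]) hkey)
  · exact lf_of_rightMove_le hmove hodd (ih p q a b (by linarith [hmove.add_lt]) hkey)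

theorem le_of_key_le_of_forall_lf {n m a b : ℕ}
    (ih : ∀ p q c d, p + q + c + d < n + m + a + b → key p q < key c d → PC p q ⧏ PC c d)
    (h : key n m ≤ key a b) : PC n m ≤ PC a b :=
  le_of_forall_lf
    (fun p q hmove heven ↦ ih p q a b (by linarith [hmove.add_lt])
      ((key_lt_of_leftMove hmove heven).trans_le h))
    (fun p q hmove hodd ↦ ih n m p q (by linarith [hmove.add_lt])
      (h.trans_lt (key_lt_of_rightMove hmove hodd)))

theorem le_of_key_le {n m a b : ℕ} (h : key n m ≤ key a b) : PC n m ≤ PC a b :=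
  le_of_key_le_of_forall_lf
    (fun _ _ _ _ _ hlt ↦ lf_of_key_lt_of_forall_le (fun _ _ _ _ _ hle ↦ le_of_key_le hle) hlt) h
termination_by n + m + a + b

end PC

theorem stmt_4 (n m m' : ℕ) (hm : Odd (n + m)) (hm' : Even (n + m')) :
    PC n m' ≤ PC n m := by
  rw [Nat.odd_iff] at hm
  rw [Nat.even_iff] at hm'
  exact PC.le_of_key_le (PC.key_lt_key_iff.2 (Or.inl (by omega))).le
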